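/- Let μ be a nonadditive measure that is either autocontinuous from below or satisfies the pseudometric generating property. Let 0 < p,q < ∞. If f, g are measurable with (f - g)_{p,q} > 0, then there exists r > 0 such that the spheres S(f,r) = {h : (f-h)_{p,q} < r} and S(g,r) = {h : (g-h)_{p,q} < r} are disjoint. -/

import Mathlib

open scoped NNReal ENNReal
open ENNReal Filter Topology

variable {X : Type*} [MeasurableSpace X]

/-- The Sugeno integral of `g` w.r.t. a nonadditive measure `μ`:
`Su(μ,g) := sup_{t ∈ [0,∞)} min(t, μ({g > t}))`. -/
noncomputable def Su (μ : Set X → ℝ≥0∞) (g : X → ℝ≥0∞) : ℝ≥0∞ :=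
  ⨆ t : ℝ≥0, min (t : ℝ≥0∞) (μ {x | (t : ℝ≥0∞) < g x})

/-- The Sugeno-Lorentz prenorm `(f)_{p,q} := (Su(μ^{p/q}, (p/q)|f|^q))^{1/q}`. -/
noncomputable def SL (μ : Set X → ℝ≥0∞) (p q : ℝ) (f : X → ℝ) : ℝ≥0∞ :=
  (Su (fun A => μ A ^ (p / q)) (fun x => ENNReal.ofReal ((p / q) * |f x| ^ q))) ^ (1 / q)

/-
If spheres of every radius `1/(n+1)` about `f` and `g` met at some `hₙ`, then `f - hₙ → 0` and
`g - hₙ → 0` in `μ`-measure, since a small value of `Su` forces a small level set. With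
`ε` chosen so that `μ {ε < |f - g|} > 0` (possible as `(f - g)_{p,q} > 0`), the triangle inequality
covers `{ε < |f - g|}` by `{ε/2 < |f - hₙ|} ∪ {ε/2 < |g - hₙ|}`, two sets of vanishing measure.
Either autocontinuity from below or the pseudometric generating property then gives
`μ {ε < |f - g|} = 0`.
-/

def AutocontinuousFromBelow (μ : Set X → ℝ≥0∞) : Prop :=
  ∀ (A : Set X) (B : ℕ → Set X), MeasurableSet A → (∀ n, MeasurableSet (B n)) →
    Tendsto (fun n => μ (B n)) atTop (𝓝 0) → Tendsto (fun n => μ (A \ B n)) atTop (𝓝 (μ A))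

def PseudometricGenerating (μ : Set X → ℝ≥0∞) : Prop :=
  ∀ A B : ℕ → Set X, (∀ n, MeasurableSet (A n)) → (∀ n, MeasurableSet (B n)) →
    Tendsto (fun n => max (μ (A n)) (μ (B n))) atTop (𝓝 0) →
    Tendsto (fun n => μ (A n ∪ B n)) atTop (𝓝 0)

def MonotoneOnMeasurable (μ : Set X → ℝ≥0∞) : Prop :=
  ∀ ⦃A B : Set X⦄, MeasurableSet A → MeasurableSet B → A ⊆ B → μ A ≤ μ B

section SetFunction

variable {μ : Set X → ℝ≥0∞} {A : Set X} {B C : ℕ → Set X}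

theorem AutocontinuousFromBelow.measure_eq_zero_of_subset_union
    (hμ : AutocontinuousFromBelow μ) (hmono : MonotoneOnMeasurable μ) (hA : MeasurableSet A)
    (hB : ∀ n, MeasurableSet (B n)) (hC : ∀ n, MeasurableSet (C n))
    (hB0 : Tendsto (fun n => μ (B n)) atTop (𝓝 0)) (hC0 : Tendsto (fun n => μ (C n)) atTop (𝓝 0))
    (hsub : ∀ n, A ⊆ B n ∪ C n) : μ A = 0 := by
  have hdiff : Tendsto (fun n => μ (A \ C n)) atTop (𝓝 0) :=
    tendsto_of_tendsto_of_tendsto_of_le_of_le tendsto_const_nhds hB0 (fun _ => zero_le)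
      fun n => hmono (hA.diff (hC n)) (hB n) fun x hx => (hsub n hx.1).resolve_right hx.2
  exact tendsto_nhds_unique (hμ A C hA hC hC0) hdiff

theorem PseudometricGenerating.measure_eq_zero_of_subset_union
    (hμ : PseudometricGenerating μ) (hmono : MonotoneOnMeasurable μ) (hA : MeasurableSet A)
    (hB : ∀ n, MeasurableSet (B n)) (hC : ∀ n, MeasurableSet (C n))
    (hB0 : Tendsto (fun n => μ (B n)) atTop (𝓝 0)) (hC0 : Tendsto (fun n => μ (C n)) atTop (𝓝 0))
    (hsub : ∀ n, A ⊆ B n ∪ C n) : μ A = 0 := by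
  have hunion := hμ B C hB hC (by simpa using hB0.max hC0)
  exact le_zero_iff.mp <|
    ge_of_tendsto hunion (Eventually.of_forall fun n => hmono hA ((hB n).union (hC n)) (hsub n))

end SetFunction

section Sugeno

variable {α : Type*} {ν : Set α → ℝ≥0∞}

theorem min_le_Su (ν : Set α → ℝ≥0∞) (G : α → ℝ≥0∞) (t : ℝ≥0) :
    min (t : ℝ≥0∞) (ν {x | (t : ℝ≥0∞) < G x}) ≤ Su ν G :=
  le_iSup (fun s : ℝ≥0 => min (s : ℝ≥0∞) (ν {x | (s : ℝ≥0∞) < G x})) t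

theorem exists_pos_of_Su_pos {G : α → ℝ≥0∞} (h : 0 < Su ν G) :
    ∃ t : ℝ≥0, 0 < t ∧ 0 < ν {x | (t : ℝ≥0∞) < G x} := by
  obtain ⟨t, ht⟩ := lt_iSup_iff.mp h
  obtain ⟨ht0, hνt⟩ := lt_min_iff.mp ht
  exact ⟨t, ENNReal.coe_pos.mp ht0, hνt⟩

theorem tendsto_levelSet_of_tendsto_Su {G : ℕ → α → ℝ≥0∞}
    (hG : Tendsto (fun n => Su ν (G n)) atTop (𝓝 0)) {t : ℝ≥0} (ht : 0 < t) :
    Tendsto (fun n => ν {x | (t : ℝ≥0∞) < G n x}) atTop (𝓝 0) := by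
  have hsmall : ∀ᶠ n in atTop, Su ν (G n) < t := hG.eventually (gt_mem_nhds (by simpa using ht))
  refine tendsto_of_tendsto_of_tendsto_of_le_of_le' tendsto_const_nhds hG
    (Eventually.of_forall fun _ => zero_le) (hsmall.mono fun n hn => ?_)
  have hνt : ν {x | (t : ℝ≥0∞) < G n x} < t :=
    (min_lt_iff.mp ((min_le_Su ν (G n) t).trans_lt hn)).resolve_left (lt_irrefl _)
  simpa only [min_eq_right hνt.le] using min_le_Su ν (G n) t

end Sugeno

section SugenoLorentz

variable {α : Type*} {μ : Set α → ℝ≥0∞} {p q : ℝ}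

theorem ofReal_mul_rpow_lt_iff {c q a b : ℝ} (hc : 0 < c) (hq : 0 < q) (ha : 0 ≤ a)
    (hb : 0 ≤ b) : ENNReal.ofReal (c * a ^ q) < ENNReal.ofReal (c * b ^ q) ↔ a < b := by
  rw [ENNReal.ofReal_lt_ofReal_iff_of_nonneg (by positivity), mul_lt_mul_iff_right₀ hc,
    Real.rpow_lt_rpow_iff ha hb hq]

theorem setOf_ofReal_lt_ofReal_mul_rpow {c q ε : ℝ} (hc : 0 < c) (hq : 0 < q) (hε : 0 ≤ ε)
    (F : α → ℝ) :
    {x | ENNReal.ofReal (c * ε ^ q) < ENNReal.ofReal (c * |F x| ^ q)} = {x | ε < |F x|} := by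
  ext x
  exact ofReal_mul_rpow_lt_iff hc hq hε (abs_nonneg _)

theorem SL_rpow (hq : q ≠ 0) (F : α → ℝ) :
    SL μ p q F ^ q = Su (fun A => μ A ^ (p / q)) (fun x => ENNReal.ofReal ((p / q) * |F x| ^ q)) := by
  rw [SL, ← ENNReal.rpow_mul, one_div_mul_cancel hq, ENNReal.rpow_one]

theorem exists_measure_pos_of_SL_pos (hp : 0 < p) (hq : 0 < q) {F : α → ℝ}
    (hF : 0 < SL μ p q F) : ∃ ε > 0, 0 < μ {x | ε < |F x|} := by
  have hc : 0 < p / q := div_pos hp hq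
  have hSu : 0 < Su (fun A => μ A ^ (p / q)) (fun x => ENNReal.ofReal ((p / q) * |F x| ^ q)) :=
    pos_of_ne_zero fun h => hF.ne' <| by rw [SL, h, ENNReal.zero_rpow_of_pos (by positivity)]
  obtain ⟨t, ht, hμt⟩ := exists_pos_of_Su_pos hSu
  set ε := ((t : ℝ) / (p / q)) ^ q⁻¹
  have hct : (t : ℝ≥0∞) = ENNReal.ofReal (p / q * ε ^ q) := by
    rw [Real.rpow_inv_rpow (by positivity) hq.ne', mul_div_cancel₀ _ hc.ne', ofReal_coe_nnreal]
  rw [hct, setOf_ofReal_lt_ofReal_mul_rpow hc hq (by positivity)] at hμt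
  exact ⟨ε, by positivity, pos_of_ne_zero fun h => by simp [h, hc] at hμt⟩

theorem tendsto_measure_of_tendsto_SL (hp : 0 < p) (hq : 0 < q) {F : ℕ → α → ℝ}
    (hF : Tendsto (fun n => SL μ p q (F n)) atTop (𝓝 0)) {ε : ℝ} (hε : 0 < ε) :
    Tendsto (fun n => μ {x | ε < |F n x|}) atTop (𝓝 0) := by
  have hc : 0 < p / q := div_pos hp hq
  have hSu : Tendsto (fun n => Su (fun A => μ A ^ (p / q))
      (fun x => ENNReal.ofReal ((p / q) * |F n x| ^ q))) atTop (𝓝 0) := by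
    simpa only [SL_rpow hq.ne', ENNReal.zero_rpow_of_pos hq] using hF.ennrpow_const q
  have hlevel := tendsto_levelSet_of_tendsto_Su hSu
    (t := (p / q * ε ^ q).toNNReal) (Real.toNNReal_pos.mpr (by positivity))
  simp only [← ofReal.eq_def, setOf_ofReal_lt_ofReal_mul_rpow hc hq hε.le] at hlevel
  simpa only [ENNReal.rpow_rpow_inv hc.ne', ENNReal.zero_rpow_of_pos (inv_pos.mpr hc)] using
    hlevel.ennrpow_const (p / q)⁻¹

end SugenoLorentz

theorem setOf_lt_abs_sub_subset_union {α : Type*} (f g h : α → ℝ) (ε : ℝ) :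
    {x | ε < |(f - g) x|} ⊆ {x | ε / 2 < |(f - h) x|} ∪ {x | ε / 2 < |(g - h) x|} := by
  intro x hx
  by_contra hcon
  simp only [Set.mem_union, Set.mem_ofPred_eq, Pi.sub_apply, not_or, not_lt] at hx hcon
  have := abs_sub_le (f x) (h x) (g x)
  rw [abs_sub_comm (h x)] at this
  linarith

theorem tendsto_of_lt_inv_succ {u : ℕ → ℝ≥0∞} (hu : ∀ n, u n < ((n : ℝ≥0∞) + 1)⁻¹) :
    Tendsto u atTop (𝓝 0) :=
  tendsto_of_tendsto_of_tendsto_of_le_of_le tendsto_const_nhds ENNReal.tendsto_inv_nat_nhds_zero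
    (fun _ => zero_le) fun n => (hu n).le.trans (ENNReal.inv_le_inv.mpr le_self_add)

theorem spheres_disjoint_general
    (μ : Set X → ℝ≥0∞)
    (hmono : ∀ ⦃A B : Set X⦄, MeasurableSet A → MeasurableSet B → A ⊆ B → μ A ≤ μ B)
    (hac : (∀ (A : Set X) (B : ℕ → Set X), MeasurableSet A → (∀ n, MeasurableSet (B n)) →
        Tendsto (fun n => μ (B n)) atTop (𝓝 0) →
        Tendsto (fun n => μ (A \ B n)) atTop (𝓝 (μ A))) ∨
      (∀ A B : ℕ → Set X, (∀ n, MeasurableSet (A n)) → (∀ n, MeasurableSet (B n)) →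
        Tendsto (fun n => max (μ (A n)) (μ (B n))) atTop (𝓝 0) →
        Tendsto (fun n => μ (A n ∪ B n)) atTop (𝓝 0)))
    (p q : ℝ) (hp : 0 < p) (hq : 0 < q)
    (f g : X → ℝ) (hf : Measurable f) (hg : Measurable g)
    (hfg : 0 < SL μ p q (f - g)) :
    ∃ r : ℝ≥0∞, 0 < r ∧
      ∀ h : X → ℝ, Measurable h →
        ¬ (SL μ p q (f - h) < r ∧ SL μ p q (g - h) < r) := by
  by_contra! hcon
  obtain ⟨ε, hε, hμA⟩ := exists_measure_pos_of_SL_pos hp hq hfg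
  choose h hh hfh hgh using fun n : ℕ => hcon ((n : ℝ≥0∞) + 1)⁻¹ (by simp)
  have hlevel : ∀ F : X → ℝ, Measurable F → ∀ δ : ℝ, MeasurableSet {x | δ < |F x|} :=
    fun F hF δ => measurableSet_lt measurable_const hF.abs
  have hfh0 := tendsto_measure_of_tendsto_SL hp hq (tendsto_of_lt_inv_succ hfh) (half_pos hε)
  have hgh0 := tendsto_measure_of_tendsto_SL hp hq (tendsto_of_lt_inv_succ hgh) (half_pos hε)
  have hA := hlevel _ (hf.sub hg) ε
  have hB n := hlevel _ (hf.sub (hh n)) (ε / 2)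
  have hC n := hlevel _ (hg.sub (hh n)) (ε / 2)
  have hsub n := setOf_lt_abs_sub_subset_union f g (h n) ε
  refine hμA.ne' (hac.elim (fun hμ => ?_) fun hμ => ?_)
  · exact AutocontinuousFromBelow.measure_eq_zero_of_subset_union hμ hmono hA hB hC hfh0 hgh0 hsub
  · exact PseudometricGenerating.measure_eq_zero_of_subset_union hμ hmono hA hB hC hfh0 hgh0 hsub

/-- If `μ` is autocontinuous from below or satisfies the pseudometric generating property,
and `(f-g)_{p,q} > 0`, then the spheres `S(f,r)` and `S(g,r)` are disjoint for some `r > 0`. -/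
theorem spheres_disjoint
    (μ : Set X → ℝ≥0∞) (h0 : μ ∅ = 0)
    (hmono : ∀ ⦃A B : Set X⦄, MeasurableSet A → MeasurableSet B → A ⊆ B → μ A ≤ μ B)
    (hac : (∀ (A : Set X) (B : ℕ → Set X), MeasurableSet A → (∀ n, MeasurableSet (B n)) →
        Tendsto (fun n => μ (B n)) atTop (𝓝 0) →
        Tendsto (fun n => μ (A \ B n)) atTop (𝓝 (μ A))) ∨
      (∀ A B : ℕ → Set X, (∀ n, MeasurableSet (A n)) → (∀ n, MeasurableSet (B n)) →
        Tendsto (fun n => max (μ (A n)) (μ (B n))) atTop (𝓝 0) →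
        Tendsto (fun n => μ (A n ∪ B n)) atTop (𝓝 0)))
    (p q : ℝ) (hp : 0 < p) (hq : 0 < q)
    (f g : X → ℝ) (hf : Measurable f) (hg : Measurable g)
    (hfg : 0 < SL μ p q (f - g)) :
    ∃ r : ℝ≥0∞, 0 < r ∧
      ∀ h : X → ℝ, Measurable h →
        ¬ (SL μ p q (f - h) < r ∧ SL μ p q (g - h) < r) :=
  spheres_disjoint_general μ hmono hac p q hp hq f g hf hg hfg
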